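/- arXiv:2202.02495 — 2 statements merged into one kernel-verified Lean document; each statement's English description precedes it below -/
import Mathlib

section
/- Let q ∈ (1/2, 1), let g : Z × ℕ × ℕ → Z₁ be injective, and let (G₁, ℓ_{G₁}) and (G₂, ℓ_{G₂}) be labeled graphs with labels in Z. If d_WL^(k)((𝒳_q(G₁), ℓ_{G₁}^g), (𝒳_q(G₂), ℓ_{G₂}^g)) = 0 for each k = 0, 1, …, |V_{G₁}| + |V_{G₂}|, then d_WL((𝒳_q(G₁), ℓ_{G₁}^g), (𝒳_q(G₂), ℓ_{G₂}^g)) = 0, i.e., d_WL^(k) vanishes between these two LMMCs for every k ≥ 0. -/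
open scoped BigOperators NNReal

namespace WLGW

variable {X Y W : Type*}

/-- A probability mass function on a finite type. -/
def IsPMF [Fintype X] (p : X → ℝ) : Prop :=
  (∀ x, 0 ≤ p x) ∧ ∑ x, p x = 1

/-- `γ` is a coupling of `p` and `q`. -/
def IsCoupling [Fintype X] [Fintype Y] (p : X → ℝ) (q : Y → ℝ) (γ : X → Y → ℝ) : Prop :=
  (∀ x y, 0 ≤ γ x y) ∧ (∀ x, ∑ y, γ x y = p x) ∧ (∀ y, ∑ x, γ x y = q y)

/-- `(m, μ)` is a measure Markov chain: each `m x` is a pmf, and `μ` is a fully supported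
stationary pmf. -/
def IsMMC [Fintype X] (m : X → X → ℝ) (μ : X → ℝ) : Prop :=
  (∀ x, IsPMF (m x)) ∧ IsPMF μ ∧ (∀ x, 0 < μ x) ∧ (∀ x', ∑ x, m x x' * μ x = μ x')

/-- `dX` is a metric on the finite type `X`. -/
def IsMetricOn [Fintype X] (dX : X → X → ℝ) : Prop :=
  (∀ x, dX x x = 0) ∧ (∀ x y, dX x y = dX y x) ∧ (∀ x y, x ≠ y → 0 < dX x y) ∧
    (∀ x y z, dX x z ≤ dX x y + dX y z)

/-- The iterated Weisfeiler–Lehman cost `D_k`. -/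
noncomputable def costIter [Fintype X] [Fintype Y] (mX : X → X → ℝ) (mY : Y → Y → ℝ)
    (D0 : X → Y → ℝ) : ℕ → X → Y → ℝ
  | 0 => D0
  | k + 1 => fun x y => sInf {r : ℝ | ∃ γ : X → Y → ℝ, IsCoupling (mX x) (mY y) γ ∧
      r = ∑ x', ∑ y', costIter mX mY D0 k x' y' * γ x' y'}

/-- The Weisfeiler–Lehman distance of depth `k` between two labeled measure Markov chains. -/
noncomputable def dWL {Z : Type*} [PseudoMetricSpace Z] [Fintype X] [Fintype Y]
    (mX : X → X → ℝ) (μX : X → ℝ) (ℓX : X → Z)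
    (mY : Y → Y → ℝ) (μY : Y → ℝ) (ℓY : Y → Z) (k : ℕ) : ℝ :=
  sInf {r : ℝ | ∃ γ : X → Y → ℝ, IsCoupling μX μY γ ∧
      r = ∑ x, ∑ y, costIter mX mY (fun x y => dist (ℓX x) (ℓY y)) k x y * γ x y}

/-- The absolute Weisfeiler–Lehman distance. -/
noncomputable def dWLsup {Z : Type*} [PseudoMetricSpace Z] [Fintype X] [Fintype Y]
    (mX : X → X → ℝ) (μX : X → ℝ) (ℓX : X → Z)
    (mY : Y → Y → ℝ) (μY : Y → ℝ) (ℓY : Y → Z) : ℝ :=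
  ⨆ k : ℕ, dWL mX μX ℓX mY μY ℓY k

/-- Isomorphism of labeled measure Markov chains. -/
def LMMCIso {Z : Type*} [Fintype X] [Fintype Y]
    (mX : X → X → ℝ) (μX : X → ℝ) (ℓX : X → Z)
    (mY : Y → Y → ℝ) (μY : Y → ℝ) (ℓY : Y → Z) : Prop :=
  ∃ ψ : X ≃ Y, (∀ x, ℓY (ψ x) = ℓX x) ∧ (∀ x x', mY (ψ x) (ψ x') = mX x x') ∧
    (∀ x, μY (ψ x) = μX x)

/-- The `q`-Markov kernel of a finite simple graph. -/
noncomputable def graphKernel {V : Type*} [Fintype V] [DecidableEq V] (G : SimpleGraph V) [DecidableRel G.Adj]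
    (q : ℝ) (v v' : V) : ℝ :=
  if G.degree v = 0 then (if v' = v then 1 else 0)
  else (if v' = v then q else 0) + (if G.Adj v v' then (1 - q) / (G.degree v : ℝ) else 0)

/-- The stationary degree measure of a finite simple graph. -/
noncomputable def graphMu {V : Type*} [Fintype V] (G : SimpleGraph V) [DecidableRel G.Adj]
    (v : V) : ℝ :=
  ((max (G.degree v) 1 : ℕ) : ℝ) / ∑ v', ((max (G.degree v') 1 : ℕ) : ℝ)

/-- The type of depth-`k` Weisfeiler–Lehman labels over an initial label set `Z`. -/
def WLType (Z : Type*) : ℕ → Type _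
  | 0 => Z
  | k + 1 => WLType Z k × Multiset (WLType Z k)

/-- The Weisfeiler–Lehman label hierarchy `ℓ^k` of a labeled graph. -/
def wlLabel {V Z : Type*} [Fintype V] (G : SimpleGraph V) [DecidableRel G.Adj] (ℓ : V → Z) :
    (k : ℕ) → V → WLType Z k
  | 0 => ℓ
  | k + 1 => fun v => (wlLabel G ℓ k v, (G.neighborFinset v).val.map (wlLabel G ℓ k))

/-- The multiset `L_k((G, ℓ))` of depth-`k` WL labels of all vertices. -/
def wlMultiset {V Z : Type*} [Fintype V] (G : SimpleGraph V) [DecidableRel G.Adj]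
    (ℓ : V → Z) (k : ℕ) : Multiset (WLType Z k) :=
  Finset.univ.val.map (wlLabel G ℓ k)

/-- The WL test distinguishes two labeled graphs. -/
def WLDistinguishes {V₁ V₂ Z : Type*} [Fintype V₁] [Fintype V₂]
    (G₁ : SimpleGraph V₁) [DecidableRel G₁.Adj] (ℓ₁ : V₁ → Z)
    (G₂ : SimpleGraph V₂) [DecidableRel G₂.Adj] (ℓ₂ : V₂ → Z) : Prop :=
  ∃ k, wlMultiset G₁ ℓ₁ k ≠ wlMultiset G₂ ℓ₂ k

/-- The relabeling `ℓ^g(v) = g(ℓ(v), deg v, |V|)`. -/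
def relabel {V Z Z₁ : Type*} [Fintype V] (G : SimpleGraph V) [DecidableRel G.Adj]
    (ℓ : V → Z) (g : Z × ℕ × ℕ → Z₁) : V → Z₁ :=
  fun v => g (ℓ v, G.degree v, Fintype.card V)

/-- `kpow m k = m^{⊗k}`, the `k`-step Markov kernel (`kpow m 0` is the identity kernel). -/
def kpow [Fintype X] [DecidableEq X] (m : X → X → ℝ) : ℕ → X → X → ℝ
  | 0 => fun x x' => if x' = x then 1 else 0
  | k + 1 => fun x x'' => ∑ x', kpow m k x' x'' * m x x'

/-- The Wasserstein distance between the pushforwards `(ℓX)_# p` and `(ℓY)_# q`, expressed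
through couplings of `p` and `q`. -/
noncomputable def wassersteinCost {Z : Type*} [PseudoMetricSpace Z] [Fintype X] [Fintype Y]
    (ℓX : X → Z) (ℓY : Y → Z) (p : X → ℝ) (q : Y → ℝ) : ℝ :=
  sInf {r : ℝ | ∃ γ : X → Y → ℝ, IsCoupling p q γ ∧
      r = ∑ x, ∑ y, dist (ℓX x) (ℓY y) * γ x y}

/-- The lower bound `d_WLLB^(k)` for the WL distance. -/
noncomputable def dWLLB {Z : Type*} [PseudoMetricSpace Z] [Fintype X] [Fintype Y]
    [DecidableEq X] [DecidableEq Y]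
    (mX : X → X → ℝ) (μX : X → ℝ) (ℓX : X → Z)
    (mY : Y → Y → ℝ) (μY : Y → ℝ) (ℓY : Y → Z) (k : ℕ) : ℝ :=
  sInf {r : ℝ | ∃ γ : X → Y → ℝ, IsCoupling μX μY γ ∧
      r = ∑ x, ∑ y, wassersteinCost ℓX ℓY (kpow mX k x) (kpow mY k y) * γ x y}

/-- Dimension sequence of an MCNN: `mcnnDim d dims 0 = d`, then `dims`. -/
def mcnnDim (d : ℕ) (dims : ℕ → ℕ) : ℕ → ℕ
  | 0 => d
  | i + 1 => dims i

/-- A `k`-layer Markov chain neural network on `ℝ^d`-LMMCs: Lipschitz maps `φ_1, …, φ_{k+1}`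
followed by a continuous map `ψ`. -/
structure MCNN (d k : ℕ) where
  dims : ℕ → ℕ
  φ : (i : ℕ) → EuclideanSpace ℝ (Fin (mcnnDim d dims i)) →
      EuclideanSpace ℝ (Fin (mcnnDim d dims (i + 1)))
  φ_lip : ∀ i, ∃ K : ℝ≥0, LipschitzWith K (φ i)
  ψ : EuclideanSpace ℝ (Fin (mcnnDim d dims (k + 1))) → ℝ
  ψ_cont : Continuous ψ

/-- Labels after `j` layers of an MCNN (the map `F_{φ_j} ∘ ⋯ ∘ F_{φ_1}`). -/
noncomputable def mcnnLabel {X : Type*} [Fintype X] {d k : ℕ} (N : MCNN d k)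
    (m : X → X → ℝ) (ℓ : X → EuclideanSpace ℝ (Fin d)) :
    (j : ℕ) → X → EuclideanSpace ℝ (Fin (mcnnDim d N.dims j))
  | 0 => ℓ
  | j + 1 => fun x => ∑ x', m x x' • N.φ j (mcnnLabel N m ℓ j x')

/-- Evaluation of an MCNN on an `ℝ^d`-LMMC: `ψ ∘ S_{φ_{k+1}} ∘ F_{φ_k} ∘ ⋯ ∘ F_{φ_1}`. -/
noncomputable def mcnnEval {X : Type*} [Fintype X] {d k : ℕ} (N : MCNN d k)
    (m : X → X → ℝ) (μ : X → ℝ) (ℓ : X → EuclideanSpace ℝ (Fin d)) : ℝ :=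
  N.ψ (∑ x, μ x • N.φ k (mcnnLabel N m ℓ k x))

/-- `k`-step couplings between the Markov kernels `mX` and `mY` (defined for `k ≥ 1`). -/
def IsStepCoupling [Fintype X] [Fintype Y] (mX : X → X → ℝ) (mY : Y → Y → ℝ) :
    ℕ → (X → Y → X → Y → ℝ) → Prop
  | 0, _ => False
  | 1, ν => ∀ x y, IsCoupling (mX x) (mY y) (ν x y)
  | k + 2, ν => ∃ νk ν1 : X → Y → X → Y → ℝ,
      IsStepCoupling mX mY (k + 1) νk ∧ (∀ x y, IsCoupling (mX x) (mY y) (ν1 x y)) ∧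
      ν = fun x y x' y' => ∑ x'', ∑ y'', νk x'' y'' x' y' * ν1 x y x'' y''

/-- The `k`-distortion `dis^(k)(γ, ν)`. -/
def disk [Fintype X] [Fintype Y] (dX : X → X → ℝ) (dY : Y → Y → ℝ)
    (γ : X → Y → ℝ) (ν : X → Y → X → Y → ℝ) : ℝ :=
  ∑ x, ∑ y, ∑ x'', ∑ y'', ∑ x', ∑ y',
    |dX x x' - dY y y'| * ν x'' y'' x' y' * γ x'' y'' * γ x y

/-- The `k`-Gromov–Wasserstein distance between Markov chain metric spaces. -/
noncomputable def dGWk [Fintype X] [Fintype Y]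
    (mX : X → X → ℝ) (dX : X → X → ℝ) (μX : X → ℝ)
    (mY : Y → Y → ℝ) (dY : Y → Y → ℝ) (μY : Y → ℝ) (k : ℕ) : ℝ :=
  sInf {r : ℝ | ∃ (γ : X → Y → ℝ) (ν : X → Y → X → Y → ℝ),
      IsCoupling μX μY γ ∧ IsStepCoupling mX mY k ν ∧ r = disk dX dY γ ν}

/-- The absolute Gromov–Wasserstein distance between MCMSs: `sup_{k ≥ 1} d_GW^(k)`. -/
noncomputable def dGWMCMS [Fintype X] [Fintype Y]
    (mX : X → X → ℝ) (dX : X → X → ℝ) (μX : X → ℝ)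
    (mY : Y → Y → ℝ) (dY : Y → Y → ℝ) (μY : Y → ℝ) : ℝ :=
  ⨆ k : ℕ, dGWk mX dX μX mY dY μY (k + 1)

/-- Isomorphism of Markov chain metric spaces. -/
def MCMSIso [Fintype X] [Fintype Y]
    (mX : X → X → ℝ) (dX : X → X → ℝ) (μX : X → ℝ)
    (mY : Y → Y → ℝ) (dY : Y → Y → ℝ) (μY : Y → ℝ) : Prop :=
  ∃ ψ : X ≃ Y, (∀ x x', dY (ψ x) (ψ x') = dX x x') ∧
    (∀ x x', mY (ψ x) (ψ x') = mX x x') ∧ (∀ x, μY (ψ x) = μX x)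

/-- The decoupled Gromov–Wasserstein distance between finite metric measure spaces. -/
noncomputable def dGWbi [Fintype X] [Fintype Y]
    (dX : X → X → ℝ) (μX : X → ℝ) (dY : Y → Y → ℝ) (μY : Y → ℝ) : ℝ :=
  sInf {r : ℝ | ∃ γ γ' : X → Y → ℝ, IsCoupling μX μY γ ∧ IsCoupling μX μY γ' ∧
      r = ∑ x, ∑ y, ∑ x', ∑ y', |dX x x' - dY y y'| * γ' x' y' * γ x y}

/-- `k`-step couplings between the measures `μX` and `μY`
(`k = 0` gives ordinary couplings). -/
def IsMeasureStepCoupling [Fintype X] [Fintype Y] (mX : X → X → ℝ) (mY : Y → Y → ℝ)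
    (μX : X → ℝ) (μY : Y → ℝ) : ℕ → (X → Y → ℝ) → Prop
  | 0, γ => IsCoupling μX μY γ
  | k + 1, γk => ∃ (γ : X → Y → ℝ) (ν : X → Y → X → Y → ℝ),
      IsCoupling μX μY γ ∧ IsStepCoupling mX mY (k + 1) ν ∧
      γk = fun x' y' => ∑ x, ∑ y, ν x y x' y' * γ x y

/-- The WWL label iteration. -/
noncomputable def wwlLabel {V : Type*} [Fintype V] {d : ℕ} (G : SimpleGraph V)
    [DecidableRel G.Adj] (ℓ : V → EuclideanSpace ℝ (Fin d)) :
    ℕ → V → EuclideanSpace ℝ (Fin d)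
  | 0 => ℓ
  | i + 1 => fun v => (1 / 2 : ℝ) •
      (wwlLabel G ℓ i v + ((G.degree v : ℝ))⁻¹ • ∑ v' ∈ G.neighborFinset v, wwlLabel G ℓ i v')

/-- The stacked WWL label `L^k_G = (ℓ^0, …, ℓ^k)`, valued in Euclidean `ℝ^{d(k+1)}`. -/
noncomputable def stackedLabel {V : Type*} [Fintype V] {d : ℕ} (G : SimpleGraph V)
    [DecidableRel G.Adj] (ℓ : V → EuclideanSpace ℝ (Fin d)) (k : ℕ) (v : V) :
    EuclideanSpace ℝ (Fin (k + 1) × Fin d) :=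
  WithLp.toLp 2 (fun p => wwlLabel G ℓ (p.1 : ℕ) v p.2)

/-!
Place both chains side by side on `V₁ ⊕ V₂`. There every WL cost `D_k` is a pseudometric (glue
couplings), so its zero set is an equivalence relation, and these relations decrease in `k`:
self-loops of mass `q > 1/2` give `(2q - 1) D_k ≤ D_{k+1}`. The number of classes cannot grow
more than `|V₁| + |V₂|` times, so the relations stall at some `k₀ ≤ |V₁| + |V₂|`; once they stall
they are constant, because `D_{k+1} ≤ C D_k` on a finite set passes through the transport
step. Hence `D_k ≤ C D_{k₀}` and `d_WL^(k) ≤ C d_WL^(k₀) = 0` for all `k ≥ k₀`.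
-/

section Coupling

variable {A B E : Type*} [Fintype A] [Fintype B] [Fintype E]

theorem IsCoupling.prod {p : A → ℝ} {r : B → ℝ} (hp : IsPMF p) (hr : IsPMF r) :
    IsCoupling p r (fun a b => p a * r b) :=
  ⟨fun a b => mul_nonneg (hp.1 a) (hr.1 b),
    fun a => by rw [← Finset.mul_sum, hr.2, mul_one],
    fun b => by rw [← Finset.sum_mul, hp.2, one_mul]⟩

theorem IsCoupling.swap {p : A → ℝ} {r : B → ℝ} {γ : A → B → ℝ} (hγ : IsCoupling p r γ) :
    IsCoupling r p (fun b a => γ a b) :=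
  ⟨fun b a => hγ.1 a b, hγ.2.2, hγ.2.1⟩

theorem IsCoupling.diagonal [DecidableEq A] {p : A → ℝ} (hp : ∀ a, 0 ≤ p a) :
    IsCoupling p p (fun a a' => if a' = a then p a else 0) :=
  ⟨fun a a' => by dsimp only; split_ifs <;> simp [hp], fun a => by simp, fun a' => by simp⟩

theorem IsCoupling.right_nonneg {p : A → ℝ} {r : B → ℝ} {γ : A → B → ℝ}
    (hγ : IsCoupling p r γ) (b : B) : 0 ≤ r b :=
  hγ.2.2 b ▸ Finset.sum_nonneg fun a _ => hγ.1 a b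

theorem IsCoupling.eq_zero_of_right_eq_zero {p : A → ℝ} {r : B → ℝ} {γ : A → B → ℝ}
    (hγ : IsCoupling p r γ) {b : B} (hb : r b = 0) (a : A) : γ a b = 0 :=
  (Finset.sum_eq_zero_iff_of_nonneg fun a' _ => hγ.1 a' b).1 (hγ.2.2 b ▸ hb) a
    (Finset.mem_univ a)

theorem IsCoupling.add_sub_one_le {p : A → ℝ} {r : B → ℝ} {γ : A → B → ℝ}
    (hγ : IsCoupling p r γ) (hr : IsPMF r) (a : A) (b : B) :
    p a + r b - 1 ≤ γ a b := by
  classical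
  have hrow : γ a b + ∑ b' ∈ Finset.univ.erase b, γ a b' = p a := by
    rw [← hγ.2.1 a, Finset.add_sum_erase _ _ (Finset.mem_univ b)]
  have hr1 : r b + ∑ b' ∈ Finset.univ.erase b, r b' = 1 := by
    rw [← hr.2, Finset.add_sum_erase _ _ (Finset.mem_univ b)]
  have hle : ∑ b' ∈ Finset.univ.erase b, γ a b' ≤ ∑ b' ∈ Finset.univ.erase b, r b' :=
    Finset.sum_le_sum fun b' _ => hγ.2.2 b' ▸
      Finset.single_le_sum (fun a' _ => hγ.1 a' b') (Finset.mem_univ a)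
  linarith

/-- The law on `A × B × E` gluing `γ₁` and `γ₂` along their common marginal `r`; where
`r b = 0` both factors vanish, so the junk value of `/ 0` is harmless. -/
noncomputable def gluing (r : B → ℝ) (γ₁ : A → B → ℝ) (γ₂ : B → E → ℝ) : A → B → E → ℝ :=
  fun a b e => γ₁ a b * γ₂ b e / r b

theorem sum_gluing_right {p : A → ℝ} {r : B → ℝ} {s : E → ℝ} {γ₁ : A → B → ℝ}
    {γ₂ : B → E → ℝ} (h₁ : IsCoupling p r γ₁) (h₂ : IsCoupling r s γ₂) (a : A) (b : B) :
    ∑ e, gluing r γ₁ γ₂ a b e = γ₁ a b := by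
  simp only [gluing, mul_div_assoc, ← Finset.mul_sum, ← Finset.sum_div, h₂.2.1 b]
  rcases eq_or_ne (r b) 0 with hb | hb
  · simp [h₁.eq_zero_of_right_eq_zero hb a]
  · rw [div_self hb, mul_one]

theorem sum_gluing_left {p : A → ℝ} {r : B → ℝ} {s : E → ℝ} {γ₁ : A → B → ℝ}
    {γ₂ : B → E → ℝ} (h₁ : IsCoupling p r γ₁) (h₂ : IsCoupling r s γ₂) (b : B) (e : E) :
    ∑ a, gluing r γ₁ γ₂ a b e = γ₂ b e := by
  simp only [gluing, mul_div_right_comm _ (γ₂ b e), ← Finset.sum_mul, ← Finset.sum_div,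
    h₁.2.2 b]
  rcases eq_or_ne (r b) 0 with hb | hb
  · simp [h₂.swap.eq_zero_of_right_eq_zero hb e]
  · rw [div_self hb, one_mul]

theorem IsCoupling.glue {p : A → ℝ} {r : B → ℝ} {s : E → ℝ} {γ₁ : A → B → ℝ}
    {γ₂ : B → E → ℝ} (h₁ : IsCoupling p r γ₁) (h₂ : IsCoupling r s γ₂) :
    IsCoupling p s (fun a e => ∑ b, gluing r γ₁ γ₂ a b e) := by
  refine ⟨fun a e => Finset.sum_nonneg fun b _ => ?_, fun a => ?_, fun e => ?_⟩
  · exact div_nonneg (mul_nonneg (h₁.1 a b) (h₂.1 b e)) (h₁.right_nonneg b)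
  · rw [Finset.sum_comm]
    simp only [sum_gluing_right h₁ h₂, h₁.2.1 a]
  · rw [Finset.sum_comm]
    simp only [sum_gluing_left h₁ h₂, h₂.2.2 e]

theorem cost_glue_le {p : A → ℝ} {r : B → ℝ} {s : E → ℝ} {γ₁ : A → B → ℝ}
    {γ₂ : B → E → ℝ} (h₁ : IsCoupling p r γ₁) (h₂ : IsCoupling r s γ₂)
    {c : A → E → ℝ} {c₁ : A → B → ℝ} {c₂ : B → E → ℝ}
    (hc : ∀ a b e, c a e ≤ c₁ a b + c₂ b e) :
    ∑ a, ∑ e, c a e * ∑ b, gluing r γ₁ γ₂ a b e ≤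
      ∑ a, ∑ b, c₁ a b * γ₁ a b + ∑ b, ∑ e, c₂ b e * γ₂ b e := by
  have hπ : ∀ a b e, 0 ≤ gluing r γ₁ γ₂ a b e := fun a b e =>
    div_nonneg (mul_nonneg (h₁.1 a b) (h₂.1 b e)) (h₁.right_nonneg b)
  calc ∑ a, ∑ e, c a e * ∑ b, gluing r γ₁ γ₂ a b e
      = ∑ a, ∑ b, ∑ e, c a e * gluing r γ₁ γ₂ a b e := by
        simp only [Finset.mul_sum]
        exact Finset.sum_congr rfl fun a _ => Finset.sum_comm
    _ ≤ ∑ a, ∑ b, ∑ e, (c₁ a b + c₂ b e) * gluing r γ₁ γ₂ a b e := by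
        gcongr with a _ b _ e _
        exacts [hπ a b e, hc a b e]
    _ = ∑ a, ∑ b, c₁ a b * ∑ e, gluing r γ₁ γ₂ a b e +
          ∑ b, ∑ e, c₂ b e * ∑ a, gluing r γ₁ γ₂ a b e := by
        simp only [add_mul, Finset.sum_add_distrib, Finset.mul_sum]
        congr 1
        rw [Finset.sum_comm]
        exact Finset.sum_congr rfl fun b _ => Finset.sum_comm
    _ = ∑ a, ∑ b, c₁ a b * γ₁ a b + ∑ b, ∑ e, c₂ b e * γ₂ b e := by
        simp only [sum_gluing_right h₁ h₂, sum_gluing_left h₁ h₂]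

end Coupling

section TransportCost

variable {A B : Type*} [Fintype A] [Fintype B]

/-- Since `sInf ∅ = 0`, this is `0` when `p` and `r` admit no coupling. -/
noncomputable def transportCost (c : A → B → ℝ) (p : A → ℝ) (r : B → ℝ) : ℝ :=
  sInf {x : ℝ | ∃ γ : A → B → ℝ, IsCoupling p r γ ∧ x = ∑ a, ∑ b, c a b * γ a b}

theorem costIter_succ {X Y : Type*} [Fintype X] [Fintype Y] (mX : X → X → ℝ)
    (mY : Y → Y → ℝ) (D0 : X → Y → ℝ) (k : ℕ) (x : X) (y : Y) :
    costIter mX mY D0 (k + 1) x y = transportCost (costIter mX mY D0 k) (mX x) (mY y) :=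
  rfl

theorem dWL_eq_transportCost {Z X Y : Type*} [PseudoMetricSpace Z] [Fintype X] [Fintype Y]
    (mX : X → X → ℝ) (μX : X → ℝ) (ℓX : X → Z) (mY : Y → Y → ℝ) (μY : Y → ℝ) (ℓY : Y → Z)
    (k : ℕ) :
    dWL mX μX ℓX mY μY ℓY k =
      transportCost (costIter mX mY (fun x y => dist (ℓX x) (ℓY y)) k) μX μY :=
  rfl

variable {c c' : A → B → ℝ} {p : A → ℝ} {r : B → ℝ}

theorem cost_nonneg (hc : ∀ a b, 0 ≤ c a b) {γ : A → B → ℝ} (hγ : IsCoupling p r γ) :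
    0 ≤ ∑ a, ∑ b, c a b * γ a b :=
  Finset.sum_nonneg fun a _ => Finset.sum_nonneg fun b _ => mul_nonneg (hc a b) (hγ.1 a b)

theorem transportCost_nonneg (hc : ∀ a b, 0 ≤ c a b) : 0 ≤ transportCost c p r :=
  Real.sInf_nonneg <| by rintro _ ⟨γ, hγ, rfl⟩; exact cost_nonneg hc hγ

theorem transportCost_le (hc : ∀ a b, 0 ≤ c a b) {γ : A → B → ℝ} (hγ : IsCoupling p r γ) :
    transportCost c p r ≤ ∑ a, ∑ b, c a b * γ a b :=
  csInf_le ⟨0, by rintro _ ⟨γ, hγ, rfl⟩; exact cost_nonneg hc hγ⟩ ⟨γ, hγ, rfl⟩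

theorem le_transportCost {t : ℝ} (hpr : ∃ γ, IsCoupling p r γ)
    (h : ∀ γ, IsCoupling p r γ → t ≤ ∑ a, ∑ b, c a b * γ a b) : t ≤ transportCost c p r := by
  obtain ⟨γ, hγ⟩ := hpr
  exact le_csInf ⟨_, γ, hγ, rfl⟩ (by rintro _ ⟨γ, hγ, rfl⟩; exact h γ hγ)

theorem transportCost_of_not_exists (hpr : ¬∃ γ, IsCoupling p r γ) :
    transportCost c p r = 0 := by
  rw [transportCost, ← Real.sInf_empty]
  congr 1
  exact Set.eq_empty_of_forall_notMem fun _ ⟨γ, hγ, _⟩ => hpr ⟨γ, hγ⟩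

theorem transportCost_le_mul {C : ℝ} (hC : 0 < C) (hc : ∀ a b, 0 ≤ c a b)
    (hcc' : ∀ a b, c a b ≤ C * c' a b) :
    transportCost c p r ≤ C * transportCost c' p r := by
  by_cases hpr : ∃ γ, IsCoupling p r γ
  · rw [← div_le_iff₀' hC]
    refine le_transportCost hpr fun γ hγ => (div_le_iff₀' hC).2 ?_
    calc transportCost c p r ≤ ∑ a, ∑ b, c a b * γ a b := transportCost_le hc hγ
      _ ≤ ∑ a, ∑ b, C * c' a b * γ a b := by gcongr with a _ b _; exacts [hγ.1 a b, hcc' a b]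
      _ = C * ∑ a, ∑ b, c' a b * γ a b := by simp only [Finset.mul_sum, mul_assoc]
  · simp [transportCost_of_not_exists hpr]

theorem transportCost_swap : transportCost (fun b a => c a b) r p = transportCost c p r := by
  unfold transportCost
  congr 1
  ext x
  constructor
  · rintro ⟨γ, hγ, rfl⟩
    exact ⟨_, hγ.swap, Finset.sum_comm⟩
  · rintro ⟨γ, hγ, rfl⟩
    exact ⟨_, hγ.swap, Finset.sum_comm⟩

end TransportCost

theorem exists_pos_le_mul_of_eq_zero {ι : Type*} [Fintype ι] {f g : ι → ℝ}
    (hf : ∀ i, 0 ≤ f i) (hg : ∀ i, 0 ≤ g i) (hfg : ∀ i, g i = 0 → f i = 0) :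
    ∃ C, 0 < C ∧ ∀ i, f i ≤ C * g i := by
  refine ⟨1 + ∑ j, f j / g j,
    add_pos_of_pos_of_nonneg one_pos (Finset.sum_nonneg fun j _ => div_nonneg (hf j) (hg j)),
    fun i => ?_⟩
  rcases eq_or_ne (g i) 0 with hi | hi
  · simp [hi, hfg i hi]
  · have hle : f i / g i ≤ 1 + ∑ j, f j / g j := by
      linarith [Finset.single_le_sum (fun j _ => div_nonneg (hf j) (hg j)) (Finset.mem_univ i)]
    calc f i = f i / g i * g i := (div_mul_cancel₀ _ hi).symm
      _ ≤ (1 + ∑ j, f j / g j) * g i := mul_le_mul_of_nonneg_right hle (hg i)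

theorem Setoid.card_quotient_lt {α : Type*} [Finite α] {r s : Setoid α} (hrs : r ≤ s)
    (hsr : ¬s ≤ r) : Nat.card (Quotient s) < Nat.card (Quotient r) := by
  have hφ : Function.Surjective (Setoid.map_of_le hrs) := fun x =>
    x.inductionOn fun a => ⟨Quotient.mk r a, rfl⟩
  refine (Nat.card_le_card_of_surjective _ hφ).lt_of_ne fun hcard => hsr fun a b hab => ?_
  have hinj := ((Nat.bijective_iff_surjective_and_card _).2 ⟨hφ, hcard.symm⟩).1
  exact Quotient.exact (@hinj (Quotient.mk r a) (Quotient.mk r b) (Quotient.sound hab))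

theorem Setoid.exists_le_card_le_succ {α : Type*} [Fintype α] (R : ℕ → Setoid α)
    (hR : ∀ k, R (k + 1) ≤ R k) : ∃ k ≤ Fintype.card α, R k ≤ R (k + 1) := by
  by_contra! hstall
  have hgrow : ∀ k ≤ Fintype.card α + 1, k ≤ Nat.card (Quotient (R k)) := by
    intro k hk
    induction k with
    | zero => exact Nat.zero_le _
    | succ k ih =>
      have := Setoid.card_quotient_lt (hR k) (hstall k (by omega))
      have := ih (by omega)
      omega
  have hle : Nat.card (Quotient (R (Fintype.card α + 1))) ≤ Fintype.card α :=
    Nat.card_eq_fintype_card (α := α) ▸ Nat.card_le_card_of_surjective _ Quotient.mk_surjective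
  have := hgrow _ le_rfl
  omega

section TwoChains

variable {X Y : Type*} [Fintype X] [Fintype Y] {mX : X → X → ℝ} {mY : Y → Y → ℝ}
  {D0 : X → Y → ℝ}

theorem costIter_nonneg (hD0 : ∀ x y, 0 ≤ D0 x y) (k : ℕ) (x : X) (y : Y) :
    0 ≤ costIter mX mY D0 k x y := by
  induction k generalizing x y with
  | zero => exact hD0 x y
  | succ k ih => exact transportCost_nonneg ih

/-- Self-loops of mass `q` force every coupling of `mX x` and `mY y` to keep mass `2q - 1` on
`(x, y)`. -/
theorem mul_costIter_le_costIter_succ (hD0 : ∀ x y, 0 ≤ D0 x y) (hmX : ∀ x, IsPMF (mX x))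
    (hmY : ∀ y, IsPMF (mY y)) {q : ℝ} (hX : ∀ x, q ≤ mX x x) (hY : ∀ y, q ≤ mY y y)
    (k : ℕ) (x : X) (y : Y) :
    (2 * q - 1) * costIter mX mY D0 k x y ≤ costIter mX mY D0 (k + 1) x y := by
  have hD := costIter_nonneg (mX := mX) (mY := mY) hD0 k
  refine le_transportCost ⟨_, .prod (hmX x) (hmY y)⟩ fun γ hγ => ?_
  have hmass : 2 * q - 1 ≤ γ x y := by
    linarith [hγ.add_sub_one_le (hmY y) x y, hX x, hY y]
  calc (2 * q - 1) * costIter mX mY D0 k x y ≤ costIter mX mY D0 k x y * γ x y := by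
        rw [mul_comm]; exact mul_le_mul_of_nonneg_left hmass (hD x y)
    _ ≤ ∑ y', costIter mX mY D0 k x y' * γ x y' :=
        Finset.single_le_sum (f := fun y' => _ * γ x y')
          (fun y' _ => mul_nonneg (hD x y') (hγ.1 x y')) (Finset.mem_univ y)
    _ ≤ ∑ x', ∑ y', costIter mX mY D0 k x' y' * γ x' y' :=
        Finset.single_le_sum (f := fun x' => ∑ y', _ * γ x' y')
          (fun x' _ => Finset.sum_nonneg fun y' _ => mul_nonneg (hD x' y') (hγ.1 x' y'))
          (Finset.mem_univ x)

theorem costIter_eq_zero_of_succ (hD0 : ∀ x y, 0 ≤ D0 x y) (hmX : ∀ x, IsPMF (mX x))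
    (hmY : ∀ y, IsPMF (mY y)) {q : ℝ} (hq : 1 / 2 < q) (hX : ∀ x, q ≤ mX x x)
    (hY : ∀ y, q ≤ mY y y) {k : ℕ} {x : X} {y : Y} (h : costIter mX mY D0 (k + 1) x y = 0) :
    costIter mX mY D0 k x y = 0 := by
  have := mul_costIter_le_costIter_succ hD0 hmX hmY hX hY k x y
  have := costIter_nonneg (mX := mX) (mY := mY) hD0 k x y
  nlinarith

/-- `D_{k+1}` is then dominated by a multiple of `D_k`, and transport costs preserve
domination. -/
theorem costIter_succ_succ_eq_zero_of_stable (hD0 : ∀ x y, 0 ≤ D0 x y) {k : ℕ}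
    (hk : ∀ x y, costIter mX mY D0 k x y = 0 → costIter mX mY D0 (k + 1) x y = 0) (x : X)
    (y : Y) (h : costIter mX mY D0 (k + 1) x y = 0) : costIter mX mY D0 (k + 2) x y = 0 := by
  have hD := costIter_nonneg (mX := mX) (mY := mY) hD0
  obtain ⟨C, hC, hdom⟩ := exists_pos_le_mul_of_eq_zero (ι := X × Y) (fun p => hD (k + 1) p.1 p.2)
    (fun p => hD k p.1 p.2) fun p => hk p.1 p.2
  refine le_antisymm ?_ (hD (k + 2) x y)
  calc costIter mX mY D0 (k + 2) x y ≤ C * costIter mX mY D0 (k + 1) x y :=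
        transportCost_le_mul hC (hD (k + 1)) fun x' y' => hdom (x', y')
    _ = 0 := by rw [h, mul_zero]

theorem costIter_eq_zero_of_stable_of_le (hD0 : ∀ x y, 0 ≤ D0 x y) {k₀ : ℕ}
    (hk₀ : ∀ x y, costIter mX mY D0 k₀ x y = 0 → costIter mX mY D0 (k₀ + 1) x y = 0)
    {k : ℕ} (hk : k₀ ≤ k) (x : X) (y : Y) (h : costIter mX mY D0 k₀ x y = 0) :
    costIter mX mY D0 k x y = 0 := by
  have hstable : ∀ j, k₀ ≤ j →
      ∀ x y, costIter mX mY D0 j x y = 0 → costIter mX mY D0 (j + 1) x y = 0 := by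
    intro j hj
    induction j, hj using Nat.le_induction with
    | base => exact hk₀
    | succ j _ ih => exact costIter_succ_succ_eq_zero_of_stable hD0 ih
  induction k, hk using Nat.le_induction with
  | base => exact h
  | succ j hj ih => exact hstable j hj x y ih

end TwoChains

section SingleChain

variable {T Z : Type*} [Fintype T] [PseudoMetricSpace Z] {m : T → T → ℝ} {ℓ : T → Z}

local notation "𝒟" => costIter m m (fun a b => dist (ℓ a) (ℓ b))

theorem costIter_self (hm : ∀ t, IsPMF (m t)) (k : ℕ) (t : T) : 𝒟 k t t = 0 := by
  classical
  induction k generalizing t with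
  | zero => exact dist_self _
  | succ k ih =>
    refine le_antisymm ?_ (costIter_nonneg (fun _ _ => dist_nonneg) _ t t)
    refine (transportCost_le (costIter_nonneg (fun _ _ => dist_nonneg) k)
      (IsCoupling.diagonal (hm t).1)).trans_eq ?_
    simp [mul_ite, ih]

theorem costIter_comm (k : ℕ) (a b : T) : 𝒟 k a b = 𝒟 k b a := by
  induction k generalizing a b with
  | zero => exact dist_comm _ _
  | succ k ih =>
    rw [costIter_succ, costIter_succ, ← transportCost_swap]
    simp only [ih]

theorem costIter_triangle (hm : ∀ t, IsPMF (m t)) (k : ℕ) (a b c : T) :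
    𝒟 k a c ≤ 𝒟 k a b + 𝒟 k b c := by
  induction k generalizing a b c with
  | zero => exact dist_triangle _ _ _
  | succ k ih =>
    have hD := costIter_nonneg (mX := m) (mY := m) (fun a b => dist_nonneg (x := ℓ a) (y := ℓ b)) k
    have hglue : ∀ γ₁ γ₂, IsCoupling (m a) (m b) γ₁ → IsCoupling (m b) (m c) γ₂ →
        𝒟 (k + 1) a c ≤ ∑ x, ∑ y, 𝒟 k x y * γ₁ x y + ∑ y, ∑ z, 𝒟 k y z * γ₂ y z :=
      fun γ₁ γ₂ h₁ h₂ => (transportCost_le hD (h₁.glue h₂)).trans (cost_glue_le h₁ h₂ ih)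
    have hab : ∀ γ₂, IsCoupling (m b) (m c) γ₂ →
        𝒟 (k + 1) a c - ∑ y, ∑ z, 𝒟 k y z * γ₂ y z ≤ 𝒟 (k + 1) a b := fun γ₂ h₂ =>
      le_transportCost ⟨_, .prod (hm a) (hm b)⟩ fun γ₁ h₁ => by linarith [hglue γ₁ γ₂ h₁ h₂]
    have hbc : 𝒟 (k + 1) a c - 𝒟 (k + 1) a b ≤ 𝒟 (k + 1) b c :=
      le_transportCost ⟨_, .prod (hm b) (hm c)⟩ fun γ₂ h₂ => by linarith [hab γ₂ h₂]
    linarith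

def costIterSetoid (hm : ∀ t, IsPMF (m t)) (ℓ : T → Z) (k : ℕ) : Setoid T where
  r a b := costIter m m (fun a b => dist (ℓ a) (ℓ b)) k a b = 0
  iseqv :=
    { refl := costIter_self (ℓ := ℓ) hm k
      symm := fun {a b} h => costIter_comm (ℓ := ℓ) k b a ▸ h
      trans := fun {a b c} hab hbc =>
        le_antisymm (by linarith [costIter_triangle (ℓ := ℓ) hm k a b c])
        (costIter_nonneg (fun _ _ => dist_nonneg) k a c) }

theorem exists_le_card_costIter_stable (hm : ∀ t, IsPMF (m t)) {q : ℝ} (hq : 1 / 2 < q)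
    (hself : ∀ t, q ≤ m t t) :
    ∃ k₀ ≤ Fintype.card T, ∀ a b, 𝒟 k₀ a b = 0 → 𝒟 (k₀ + 1) a b = 0 :=
  Setoid.exists_le_card_le_succ (costIterSetoid hm ℓ) fun _ _ _ =>
    costIter_eq_zero_of_succ (fun _ _ => dist_nonneg) hm hm hq hself hself

end SingleChain

section SumChain

variable {X Y : Type*}

def sumKernel (mX : X → X → ℝ) (mY : Y → Y → ℝ) : X ⊕ Y → X ⊕ Y → ℝ :=
  Sum.elim (fun x => Sum.elim (mX x) 0) (fun y => Sum.elim 0 (mY y))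

theorem IsPMF.sumElim_zero [Fintype X] [Fintype Y] {p : X → ℝ} (hp : IsPMF p) :
    IsPMF (Sum.elim p (0 : Y → ℝ)) :=
  ⟨Sum.forall.2 ⟨hp.1, fun _ => le_rfl⟩, by simp [Fintype.sum_sum_type, hp.2]⟩

theorem IsPMF.zero_sumElim [Fintype X] [Fintype Y] {r : Y → ℝ} (hr : IsPMF r) :
    IsPMF (Sum.elim (0 : X → ℝ) r) :=
  ⟨Sum.forall.2 ⟨fun _ => le_rfl, hr.1⟩, by simp [Fintype.sum_sum_type, hr.2]⟩

theorem sumKernel_isPMF [Fintype X] [Fintype Y] {mX : X → X → ℝ} {mY : Y → Y → ℝ}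
    (hmX : ∀ x, IsPMF (mX x)) (hmY : ∀ y, IsPMF (mY y)) (t : X ⊕ Y) : IsPMF (sumKernel mX mY t) := by
  cases t with
  | inl x => exact (hmX x).sumElim_zero
  | inr y => exact (hmY y).zero_sumElim

theorem le_sumKernel_self {mX : X → X → ℝ} {mY : Y → Y → ℝ} {q : ℝ} (hX : ∀ x, q ≤ mX x x)
    (hY : ∀ y, q ≤ mY y y) (t : X ⊕ Y) : q ≤ sumKernel mX mY t t := by
  cases t with
  | inl x => exact hX x
  | inr y => exact hY y

theorem transportCost_sumElim {A A' B B' : Type*} [Fintype A] [Fintype A'] [Fintype B]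
    [Fintype B'] (c : A ⊕ A' → B' ⊕ B → ℝ) (p : A → ℝ) (r : B → ℝ) :
    transportCost c (Sum.elim p 0) (Sum.elim 0 r) =
      transportCost (fun a b => c (.inl a) (.inr b)) p r := by
  unfold transportCost
  congr 1
  ext x
  constructor
  · rintro ⟨γ, hγ, rfl⟩
    have hrow : ∀ a' s, γ (.inr a') s = 0 := fun a' s =>
      hγ.swap.eq_zero_of_right_eq_zero rfl s
    have hcol : ∀ t b', γ t (.inl b') = 0 := fun t b' => hγ.eq_zero_of_right_eq_zero rfl t
    refine ⟨fun a b => γ (.inl a) (.inr b), ⟨fun a b => hγ.1 _ _, fun a => ?_, fun b => ?_⟩, ?_⟩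
    · simpa [Fintype.sum_sum_type, hcol] using hγ.2.1 (.inl a)
    · simpa [Fintype.sum_sum_type, hrow] using hγ.2.2 (.inr b)
    · simp [Fintype.sum_sum_type, hrow, hcol]
  · rintro ⟨γ, hγ, rfl⟩
    refine ⟨Sum.elim (fun a => Sum.elim 0 (γ a)) 0, ⟨?_, ?_, ?_⟩, ?_⟩
    · simp [Sum.forall, hγ.1]
    · simp [Sum.forall, Fintype.sum_sum_type, hγ.2.1]
    · simp [Sum.forall, Fintype.sum_sum_type, hγ.2.2]
    · simp [Fintype.sum_sum_type]

theorem costIter_sumKernel [Fintype X] [Fintype Y] (mX : X → X → ℝ) (mY : Y → Y → ℝ)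
    (d : X ⊕ Y → X ⊕ Y → ℝ) (k : ℕ) (x : X) (y : Y) :
    costIter mX mY (fun x y => d (.inl x) (.inr y)) k x y =
      costIter (sumKernel mX mY) (sumKernel mX mY) d k (.inl x) (.inr y) := by
  induction k generalizing x y with
  | zero => rfl
  | succ k ih =>
    rw [costIter_succ, costIter_succ]
    exact (congrArg (transportCost · (mX x) (mY y)) (funext₂ ih)).trans
      (transportCost_sumElim _ _ _).symm

end SumChain

section WLDistance

variable {X Y Z : Type*} [Fintype X] [Fintype Y] [PseudoMetricSpace Z] {mX : X → X → ℝ}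
  {mY : Y → Y → ℝ} {μX : X → ℝ} {μY : Y → ℝ} {ℓX : X → Z} {ℓY : Y → Z}

theorem exists_le_card_add_card_costIter_stable (hmX : ∀ x, IsPMF (mX x))
    (hmY : ∀ y, IsPMF (mY y)) {q : ℝ} (hq : 1 / 2 < q) (hX : ∀ x, q ≤ mX x x)
    (hY : ∀ y, q ≤ mY y y) :
    ∃ k₀ ≤ Fintype.card X + Fintype.card Y, ∀ x y,
      costIter mX mY (fun x y => dist (ℓX x) (ℓY y)) k₀ x y = 0 →
        costIter mX mY (fun x y => dist (ℓX x) (ℓY y)) (k₀ + 1) x y = 0 := by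
  obtain ⟨k₀, hk₀, hstable⟩ := exists_le_card_costIter_stable (ℓ := Sum.elim ℓX ℓY)
    (sumKernel_isPMF hmX hmY) hq (le_sumKernel_self hX hY)
  have hsum := costIter_sumKernel mX mY fun a b => dist (Sum.elim ℓX ℓY a) (Sum.elim ℓX ℓY b)
  exact ⟨k₀, Fintype.card_sum (α := X) (β := Y) ▸ hk₀, fun x y h =>
    (hsum (k₀ + 1) x y).trans (hstable _ _ ((hsum k₀ x y).symm.trans h))⟩

theorem dWL_eq_zero_of_costIter_eq_zero_imp {j k : ℕ}
    (hjk : ∀ x y, costIter mX mY (fun x y => dist (ℓX x) (ℓY y)) j x y = 0 →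
      costIter mX mY (fun x y => dist (ℓX x) (ℓY y)) k x y = 0)
    (hj : dWL mX μX ℓX mY μY ℓY j = 0) : dWL mX μX ℓX mY μY ℓY k = 0 := by
  have hD := costIter_nonneg (mX := mX) (mY := mY) fun x y => dist_nonneg (x := ℓX x) (y := ℓY y)
  obtain ⟨C, hC, hdom⟩ := exists_pos_le_mul_of_eq_zero (ι := X × Y) (fun p => hD k p.1 p.2)
    (fun p => hD j p.1 p.2) fun p => hjk p.1 p.2
  rw [dWL_eq_transportCost] at hj ⊢
  refine le_antisymm ?_ (transportCost_nonneg (hD k))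
  calc _ ≤ C * transportCost (costIter mX mY (fun x y => dist (ℓX x) (ℓY y)) j) μX μY :=
        transportCost_le_mul hC (hD k) fun x y => hdom (x, y)
    _ = 0 := by rw [hj, mul_zero]

theorem dWL_eq_zero_of_forall_le_card (hmX : ∀ x, IsPMF (mX x)) (hmY : ∀ y, IsPMF (mY y))
    {q : ℝ} (hq : 1 / 2 < q) (hX : ∀ x, q ≤ mX x x) (hY : ∀ y, q ≤ mY y y)
    (h : ∀ k ≤ Fintype.card X + Fintype.card Y, dWL mX μX ℓX mY μY ℓY k = 0) (k : ℕ) :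
    dWL mX μX ℓX mY μY ℓY k = 0 := by
  obtain ⟨k₀, hk₀, hstable⟩ := exists_le_card_add_card_costIter_stable (ℓX := ℓX) (ℓY := ℓY)
    hmX hmY hq hX hY
  rcases le_or_gt k k₀ with hk | hk
  · exact h k (hk.trans hk₀)
  · exact dWL_eq_zero_of_costIter_eq_zero_imp
      (costIter_eq_zero_of_stable_of_le (fun _ _ => dist_nonneg) hstable hk.le) (h k₀ hk₀)

end WLDistance

section Graph

variable {V : Type*} [Fintype V] [DecidableEq V] (G : SimpleGraph V) [DecidableRel G.Adj]

theorem graphKernel_isPMF {q : ℝ} (hq0 : 0 ≤ q) (hq1 : q ≤ 1) (v : V) :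
    IsPMF (graphKernel G q v) := by
  rcases eq_or_ne (G.degree v) 0 with hv | hv
  · refine ⟨fun v' => ?_, ?_⟩
    · simp only [graphKernel, if_pos hv]; split_ifs <;> norm_num
    · simp [graphKernel, hv]
  have hdeg : (0 : ℝ) < G.degree v := Nat.cast_pos.2 (Nat.pos_of_ne_zero hv)
  refine ⟨fun v' => ?_, ?_⟩
  · have : 0 ≤ (1 - q) / (G.degree v : ℝ) := div_nonneg (by linarith) hdeg.le
    simp only [graphKernel, if_neg hv]
    split_ifs <;> linarith
  · simp only [graphKernel, if_neg hv, Finset.sum_add_distrib, Finset.sum_ite_eq',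
      Finset.mem_univ, if_true, ← Finset.sum_filter, ← SimpleGraph.neighborFinset_eq_filter,
      Finset.sum_const, SimpleGraph.card_neighborFinset_eq_degree, nsmul_eq_mul]
    field_simp
    ring

theorem le_graphKernel_self {q : ℝ} (hq1 : q ≤ 1) (v : V) : q ≤ graphKernel G q v v := by
  by_cases hv : G.degree v = 0 <;> simp [graphKernel, hv, hq1]

end Graph

theorem dWL_finite_convergence_general {V₁ V₂ Z Z₁ : Type*} [Fintype V₁] [Fintype V₂]
    [DecidableEq V₁] [DecidableEq V₂] [MetricSpace Z₁]
    (g : Z × ℕ × ℕ → Z₁)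
    (q : ℝ) (hq0 : 1 / 2 < q) (hq1 : q < 1)
    (G₁ : SimpleGraph V₁) [DecidableRel G₁.Adj] (ℓ₁ : V₁ → Z)
    (G₂ : SimpleGraph V₂) [DecidableRel G₂.Adj] (ℓ₂ : V₂ → Z)
    (h : ∀ k ≤ Fintype.card V₁ + Fintype.card V₂,
      dWL (graphKernel G₁ q) (graphMu G₁) (relabel G₁ ℓ₁ g)
        (graphKernel G₂ q) (graphMu G₂) (relabel G₂ ℓ₂ g) k = 0) :
    ∀ k : ℕ, dWL (graphKernel G₁ q) (graphMu G₁) (relabel G₁ ℓ₁ g)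
        (graphKernel G₂ q) (graphMu G₂) (relabel G₂ ℓ₂ g) k = 0 :=
  have hq : 0 ≤ q := by linarith
  dWL_eq_zero_of_forall_le_card (graphKernel_isPMF G₁ hq hq1.le)
    (graphKernel_isPMF G₂ hq hq1.le) hq0 (le_graphKernel_self G₁ hq1.le)
    (le_graphKernel_self G₂ hq1.le) h

theorem dWL_finite_convergence {V₁ V₂ Z Z₁ : Type*} [Fintype V₁] [Fintype V₂]
    [DecidableEq V₁] [DecidableEq V₂] [MetricSpace Z] [MetricSpace Z₁]
    (g : Z × ℕ × ℕ → Z₁) (hg : Function.Injective g)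
    (q : ℝ) (hq0 : 1 / 2 < q) (hq1 : q < 1)
    (G₁ : SimpleGraph V₁) [DecidableRel G₁.Adj] (ℓ₁ : V₁ → Z)
    (G₂ : SimpleGraph V₂) [DecidableRel G₂.Adj] (ℓ₂ : V₂ → Z)
    (h : ∀ k ≤ Fintype.card V₁ + Fintype.card V₂,
      dWL (graphKernel G₁ q) (graphMu G₁) (relabel G₁ ℓ₁ g)
        (graphKernel G₂ q) (graphMu G₂) (relabel G₂ ℓ₂ g) k = 0) :
    ∀ k : ℕ, dWL (graphKernel G₁ q) (graphMu G₁) (relabel G₁ ℓ₁ g)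
        (graphKernel G₂ q) (graphMu G₂) (relabel G₂ ℓ₂ g) k = 0 :=
  dWL_finite_convergence_general g q hq0 hq1 G₁ ℓ₁ G₂ ℓ₂ h

end WLGW
end

section
/- For any Z-LMMCs (𝒳, ℓ_X) and (𝒴, ℓ_Y) and any integer k ≥ 1, the lower-bound distance satisfies d_WLLB^(k)((𝒳,ℓ_X),(𝒴,ℓ_Y)) ≤ d_WL^(k)((𝒳,ℓ_X),(𝒴,ℓ_Y)). -/
/-!
By induction on `k`, the Wasserstein distance between the `k`-step distributions issued from `x`
and `y` is at most `D_k(x, y)`: the `k`-step distributions are mixtures of the `(k-1)`-step ones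
with weights `m_x`, `m_y`, and gluing near-optimal couplings of the components along any
coupling of `m_x` and `m_y` shows that the transport cost is jointly convex. Since the cost
`(x, y) ↦ d_W(m^{⊗k}_x, m^{⊗k}_y)` is then pointwise below `D_k`, the same holds after optimizing
against couplings of `μ_X` and `μ_Y`.
-/

open scoped BigOperators NNReal

namespace WLGW

variable {X Y W : Type*}

/-- Optimal transport cost. `wassersteinCost`, each step of `costIter`, `dWL` and `dWLLB` are
all instances of it by definition. -/
noncomputable def otCost [Fintype X] [Fintype Y] (p : X → ℝ) (q : Y → ℝ) (c : X → Y → ℝ) : ℝ :=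
  sInf {r : ℝ | ∃ γ : X → Y → ℝ, IsCoupling p q γ ∧ r = ∑ x, ∑ y, c x y * γ x y}

section Coupling

variable {X' Y' : Type*} [Fintype X] [Fintype Y] [Fintype X'] [Fintype Y']

theorem IsPMF.isCoupling_mul {p : X → ℝ} {q : Y → ℝ} (hp : IsPMF p) (hq : IsPMF q) :
    IsCoupling p q (fun x y => p x * q y) := by
  refine ⟨fun x y => mul_nonneg (hp.1 x) (hq.1 y), fun x => ?_, fun y => ?_⟩
  · rw [← Finset.mul_sum, hq.2, mul_one]
  · rw [← Finset.sum_mul, hp.2, one_mul]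

theorem IsCoupling.bind {p : X' → ℝ} {q : Y' → ℝ} {ν : X' → Y' → ℝ}
    {P : X' → X → ℝ} {Q : Y' → Y → ℝ} {g : X' → Y' → X → Y → ℝ}
    (hν : IsCoupling p q ν) (hg : ∀ x' y', IsCoupling (P x') (Q y') (g x' y')) :
    IsCoupling (fun x => ∑ x', P x' x * p x') (fun y => ∑ y', Q y' y * q y')
      (fun x y => ∑ x', ∑ y', g x' y' x y * ν x' y') := by
  refine ⟨fun x y => Finset.sum_nonneg fun x' _ => Finset.sum_nonneg fun y' _ =>
    mul_nonneg ((hg x' y').1 x y) (hν.1 x' y'), fun x => ?_, fun y => ?_⟩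
  · calc ∑ y, ∑ x', ∑ y', g x' y' x y * ν x' y'
        = ∑ x', ∑ y', (∑ y, g x' y' x y) * ν x' y' := by
          simp only [Finset.sum_mul]; rw [Finset.sum_comm]; simp only [Finset.sum_comm (γ := Y)]
      _ = ∑ x', P x' x * p x' := by
          simp only [fun x' y' => (hg x' y').2.1 x, ← Finset.mul_sum, hν.2.1]
  · calc ∑ x, ∑ x', ∑ y', g x' y' x y * ν x' y'
        = ∑ y', ∑ x', (∑ x, g x' y' x y) * ν x' y' := by
          simp only [Finset.sum_mul]; rw [Finset.sum_comm]; simp only [Finset.sum_comm (γ := X)]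
          rw [Finset.sum_comm]
      _ = ∑ y', Q y' y * q y' := by
          simp only [fun x' y' => (hg x' y').2.2 y, ← Finset.mul_sum, hν.2.2]

theorem sum_sum_mul_bind (c : X → Y → ℝ) (ν : X' → Y' → ℝ) (g : X' → Y' → X → Y → ℝ) :
    ∑ x, ∑ y, c x y * ∑ x', ∑ y', g x' y' x y * ν x' y' =
      ∑ x', ∑ y', (∑ x, ∑ y, c x y * g x' y' x y) * ν x' y' := by
  simp only [Finset.mul_sum, Finset.sum_mul, mul_assoc]
  refine (Finset.sum_congr rfl fun x _ => Finset.sum_comm).trans ?_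
  rw [Finset.sum_comm]
  refine Finset.sum_congr rfl fun x' _ => ?_
  refine (Finset.sum_congr rfl fun x _ => Finset.sum_comm).trans ?_
  exact Finset.sum_comm

end Coupling

section OTCost

variable {X' Y' : Type*} [Fintype X] [Fintype Y] [Fintype X'] [Fintype Y']
  {p : X → ℝ} {q : Y → ℝ} {c c' : X → Y → ℝ}

theorem otCost_nonneg (hc : ∀ x y, 0 ≤ c x y) : 0 ≤ otCost p q c :=
  Real.sInf_nonneg <| by
    rintro r ⟨γ, hγ, rfl⟩
    exact Finset.sum_nonneg fun x _ => Finset.sum_nonneg fun y _ => mul_nonneg (hc x y) (hγ.1 x y)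

theorem otCost_le_of_isCoupling (hc : ∀ x y, 0 ≤ c x y) {γ : X → Y → ℝ}
    (hγ : IsCoupling p q γ) : otCost p q c ≤ ∑ x, ∑ y, c x y * γ x y := by
  refine csInf_le ⟨0, ?_⟩ ⟨γ, hγ, rfl⟩
  rintro r ⟨γ, hγ, rfl⟩
  exact Finset.sum_nonneg fun x _ => Finset.sum_nonneg fun y _ => mul_nonneg (hc x y) (hγ.1 x y)

theorem exists_isCoupling_lt_otCost_add (hpq : ∃ γ, IsCoupling p q γ) {ε : ℝ} (hε : 0 < ε) :
    ∃ γ, IsCoupling p q γ ∧ ∑ x, ∑ y, c x y * γ x y < otCost p q c + ε := by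
  obtain ⟨γ, hγ⟩ := hpq
  obtain ⟨_, ⟨γ', hγ', rfl⟩, hlt⟩ :=
    Real.lt_sInf_add_pos (s := {r | ∃ γ, IsCoupling p q γ ∧ r = ∑ x, ∑ y, c x y * γ x y})
      ⟨_, γ, hγ, rfl⟩ hε
  exact ⟨γ', hγ', hlt⟩

theorem otCost_mono (hc : ∀ x y, 0 ≤ c x y) (hcc' : ∀ x y, c x y ≤ c' x y) :
    otCost p q c ≤ otCost p q c' := by
  by_cases hpq : ∃ γ, IsCoupling p q γ
  · obtain ⟨γ, hγ⟩ := hpq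
    refine le_csInf ⟨_, γ, hγ, rfl⟩ ?_
    rintro r ⟨γ', hγ', rfl⟩
    exact (otCost_le_of_isCoupling hc hγ').trans <| Finset.sum_le_sum fun x _ =>
      Finset.sum_le_sum fun y _ => mul_le_mul_of_nonneg_right (hcc' x y) (hγ'.1 x y)
  · simp [otCost, not_exists.mp hpq]

theorem otCost_bind_le (hc : ∀ x y, 0 ≤ c x y) {P : X' → X → ℝ} {Q : Y' → Y → ℝ}
    (hPQ : ∀ x' y', ∃ γ, IsCoupling (P x') (Q y') γ) {p' : X' → ℝ} {q' : Y' → ℝ}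
    (hp' : IsPMF p') {ν : X' → Y' → ℝ} (hν : IsCoupling p' q' ν) :
    otCost (fun x => ∑ x', P x' x * p' x') (fun y => ∑ y', Q y' y * q' y') c ≤
      ∑ x', ∑ y', otCost (P x') (Q y') c * ν x' y' := by
  refine le_of_forall_pos_le_add fun ε hε => ?_
  choose g hg hgε using fun x' y' => exists_isCoupling_lt_otCost_add (c := c) (hPQ x' y') hε
  have hν_mass : ∑ x', ∑ y', ν x' y' = 1 := by simp only [hν.2.1, hp'.2]
  calc _ ≤ ∑ x, ∑ y, c x y * ∑ x', ∑ y', g x' y' x y * ν x' y' :=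
        otCost_le_of_isCoupling hc (hν.bind hg)
    _ = ∑ x', ∑ y', (∑ x, ∑ y, c x y * g x' y' x y) * ν x' y' := sum_sum_mul_bind c ν g
    _ ≤ ∑ x', ∑ y', (otCost (P x') (Q y') c + ε) * ν x' y' :=
        Finset.sum_le_sum fun x' _ => Finset.sum_le_sum fun y' _ =>
          mul_le_mul_of_nonneg_right (hgε x' y').le (hν.1 x' y')
    _ = ∑ x', ∑ y', otCost (P x') (Q y') c * ν x' y' + ε := by
        simp only [add_mul, Finset.sum_add_distrib, ← Finset.mul_sum, hν_mass, mul_one]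

end OTCost

theorem kpow_isPMF [Fintype X] [DecidableEq X] {m : X → X → ℝ} (hm : ∀ x, IsPMF (m x))
    (k : ℕ) (x : X) : IsPMF (kpow m k x) := by
  induction k generalizing x with
  | zero => exact ⟨fun x' => by unfold kpow; positivity, by simp [kpow]⟩
  | succ k ih =>
    refine ⟨fun x'' => Finset.sum_nonneg fun x' _ => mul_nonneg ((ih x').1 x'') ((hm x).1 x'), ?_⟩
    simp only [kpow]
    rw [Finset.sum_comm]
    simp only [← Finset.sum_mul, (ih _).2, one_mul, (hm x).2]

theorem otCost_kpow_le_costIter [Fintype X] [Fintype Y] [DecidableEq X] [DecidableEq Y]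
    {mX : X → X → ℝ} {mY : Y → Y → ℝ} (hmX : ∀ x, IsPMF (mX x)) (hmY : ∀ y, IsPMF (mY y))
    {c : X → Y → ℝ} (hc : ∀ x y, 0 ≤ c x y) (k : ℕ) (x : X) (y : Y) :
    otCost (kpow mX k x) (kpow mY k y) c ≤ costIter mX mY c k x y := by
  induction k generalizing x y with
  | zero =>
    have hδ := (kpow_isPMF hmX 0 x).isCoupling_mul (kpow_isPMF hmY 0 y)
    refine (otCost_le_of_isCoupling hc hδ).trans_eq ?_
    simp [kpow, costIter]
  | succ k ih =>
    refine le_csInf ⟨_, _, (hmX x).isCoupling_mul (hmY y), rfl⟩ ?_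
    rintro r ⟨ν, hν, rfl⟩
    calc otCost (kpow mX (k + 1) x) (kpow mY (k + 1) y) c
        ≤ ∑ x', ∑ y', otCost (kpow mX k x') (kpow mY k y') c * ν x' y' :=
          otCost_bind_le hc (fun x' y' => ⟨_, (kpow_isPMF hmX k x').isCoupling_mul
            (kpow_isPMF hmY k y')⟩) (hmX x) hν
      _ ≤ ∑ x', ∑ y', costIter mX mY c k x' y' * ν x' y' :=
          Finset.sum_le_sum fun x' _ => Finset.sum_le_sum fun y' _ =>
            mul_le_mul_of_nonneg_right (ih x' y') (hν.1 x' y')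

theorem dWLLB_le_dWL_general {X Y Z : Type*} [Fintype X] [Fintype Y] [DecidableEq X] [DecidableEq Y]
    [MetricSpace Z]
    (mX : X → X → ℝ) (μX : X → ℝ) (ℓX : X → Z)
    (mY : Y → Y → ℝ) (μY : Y → ℝ) (ℓY : Y → Z)
    (hX : IsMMC mX μX) (hY : IsMMC mY μY) (k : ℕ) :
    dWLLB mX μX ℓX mY μY ℓY k ≤ dWL mX μX ℓX mY μY ℓY k :=
  otCost_mono (fun _ _ => otCost_nonneg fun _ _ => dist_nonneg)
    (otCost_kpow_le_costIter hX.1 hY.1 (fun _ _ => dist_nonneg) k)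

theorem dWLLB_le_dWL {X Y Z : Type*} [Fintype X] [Fintype Y] [DecidableEq X] [DecidableEq Y]
    [MetricSpace Z]
    (mX : X → X → ℝ) (μX : X → ℝ) (ℓX : X → Z)
    (mY : Y → Y → ℝ) (μY : Y → ℝ) (ℓY : Y → Z)
    (hX : IsMMC mX μX) (hY : IsMMC mY μY) (k : ℕ) (hk : 1 ≤ k) :
    dWLLB mX μX ℓX mY μY ℓY k ≤ dWL mX μX ℓX mY μY ℓY k :=
  dWLLB_le_dWL_general mX μX ℓX mY μY ℓY hX hY k

end WLGW
end
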